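/- arXiv:1903.11746 — 2 statements merged into one kernel-verified Lean document; each statement's English description precedes it below -/
import Mathlib

section
/- Let X and Y be Hausdorff spaces with X locally compact. Then X +_f Y is Hausdorff if and only if (1) f(K) = ∅ for every compact K ⊆ X, and (2) for all a, b ∈ Y with a ≠ b there exist closed sets A, B ⊆ X with A ∪ B = X, b ∉ f(A), and a ∉ f(B). -/
/-!
The open sets of `X +_f Y` are exactly the sets `inl '' U ∪ inr '' W` with `U`, `W` open and
`f Uᶜ ⊆ Wᶜ`. If the sum is Hausdorff, the image of a compact `K ⊆ X` is closed in it, which forces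
`f K = ∅`; and the traces on `X` of the complements of disjoint neighbourhoods of `a ≠ b` form the
required closed cover. Conversely, a compact neighbourhood `K` of `x ∈ X` is separated from all of
`Y` by `inl '' Kᶜ ∪ inr '' Y` because `f K = ∅`, and a cover `A ∪ B = X` separates `a` from `b`
through `inl '' Bᶜ ∪ inr '' (U \ f B)` and `inl '' Aᶜ ∪ inr '' (V \ f A)`.
-/

open Set Topology

variable {X Y : Type*} [TopologicalSpace X] [TopologicalSpace Y]

/-- A map on subsets is *admissible* if it sends closed sets to closed sets,
the empty set to the empty set, and is finitely additive on closed sets. -/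
def Admissible (f : Set X → Set Y) : Prop :=
  (∀ A : Set X, IsClosed A → IsClosed (f A)) ∧ f ∅ = ∅ ∧
    ∀ A B : Set X, IsClosed A → IsClosed B → f (A ∪ B) = f A ∪ f B

/-- The defining condition for a subset of `X ⊕ Y` to be closed in the sum space `X +_f Y`. -/
def SumClosed (f : Set X → Set Y) (A : Set (X ⊕ Y)) : Prop :=
  IsClosed (Sum.inl ⁻¹' A) ∧ IsClosed (Sum.inr ⁻¹' A) ∧
    f (Sum.inl ⁻¹' A) ⊆ Sum.inr ⁻¹' A

theorem Admissible.mono {f : Set X → Set Y} (hf : Admissible f) {A B : Set X}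
    (hA : IsClosed A) (hB : IsClosed B) (hAB : A ⊆ B) : f A ⊆ f B := by
  have h := hf.2.2 A B hA hB
  rw [union_eq_right.mpr hAB] at h
  rw [h]; exact subset_union_left

/-- The sum space `X +_f Y`. -/
def sumTopology (f : Set X → Set Y) (hf : Admissible f) : TopologicalSpace (X ⊕ Y) where
  IsOpen s := SumClosed f sᶜ
  isOpen_univ := by
    refine ⟨?_, ?_, ?_⟩ <;> simp [hf.2.1]
  isOpen_inter := by
    rintro s t ⟨hs1, hs2, hs3⟩ ⟨ht1, ht2, ht3⟩
    refine ⟨?_, ?_, ?_⟩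
    · simpa [compl_inter, preimage_union] using hs1.union ht1
    · simpa [compl_inter, preimage_union] using hs2.union ht2
    · rw [compl_inter, preimage_union, preimage_union, hf.2.2 _ _ hs1 ht1]
      exact union_subset_union hs3 ht3
  isOpen_sUnion := by
    intro S hS
    have hc : (⋃₀ S)ᶜ = ⋂ s ∈ S, sᶜ := by
      rw [compl_sUnion, sInter_image]
    have h1 : IsClosed (Sum.inl ⁻¹' (⋃₀ S)ᶜ) := by
      rw [hc, preimage_iInter₂]
      exact isClosed_biInter fun s hs => (hS s hs).1
    have h2 : IsClosed (Sum.inr ⁻¹' (⋃₀ S)ᶜ) := by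
      rw [hc, preimage_iInter₂]
      exact isClosed_biInter fun s hs => (hS s hs).2.1
    refine ⟨h1, h2, ?_⟩
    rw [hc, preimage_iInter₂, preimage_iInter₂]
    refine subset_iInter₂ fun s hs => ?_
    have h1' : IsClosed (⋂ i ∈ S, Sum.inl ⁻¹' iᶜ) := by
      exact isClosed_biInter fun i hi => (hS i hi).1
    calc f (⋂ i ∈ S, Sum.inl ⁻¹' iᶜ) ⊆ f (Sum.inl ⁻¹' sᶜ) :=
          hf.mono h1' (hS s hs).1 (iInter₂_subset s hs)
      _ ⊆ Sum.inr ⁻¹' sᶜ := (hS s hs).2.2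

theorem isClosed_sumTopology {f : Set X → Set Y} (hf : Admissible f) (A : Set (X ⊕ Y)) :
    IsClosed[sumTopology f hf] A ↔ SumClosed f A := by
  rw [← @isOpen_compl_iff _ _ (sumTopology f hf)]
  show SumClosed f Aᶜᶜ ↔ _
  rw [compl_compl]

open Sum

theorem disjoint_image_union_image {α β : Type*} {U₁ U₂ : Set α} {W₁ W₂ : Set β}
    (hU : Disjoint U₁ U₂) (hW : Disjoint W₁ W₂) :
    Disjoint (inl '' U₁ ∪ inr '' W₁ : Set (α ⊕ β)) (inl '' U₂ ∪ inr '' W₂) := by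
  simp only [disjoint_union_left, disjoint_union_right, disjoint_image_iff inl_injective,
    disjoint_image_iff inr_injective, disjoint_image_inl_image_inr,
    disjoint_image_inl_image_inr.symm]
  exact ⟨⟨hU, trivial⟩, trivial, hW⟩

section SumTopology

variable {f : Set X → Set Y} (hf : Admissible f)

theorem continuous_inl_sumTopology : Continuous[‹_›, sumTopology f hf] (inl : X → X ⊕ Y) :=
  continuous_def.2 fun _ hs => isClosed_compl_iff.1 hs.1

theorem isOpen_sumTopology_image_union_image {U : Set X} {W : Set Y} :
    IsOpen[sumTopology f hf] (inl '' U ∪ inr '' W) ↔ IsOpen U ∧ IsOpen W ∧ f Uᶜ ⊆ Wᶜ := by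
  show SumClosed f _ ↔ _
  simp only [SumClosed, preimage_compl, preimage_union, preimage_image_eq _ inl_injective,
    preimage_image_eq _ inr_injective, preimage_inl_image_inr, preimage_inr_image_inl,
    union_empty, empty_union, isClosed_compl_iff]

theorem isOpen_sumTopology_image_inl {U : Set X} (hU : IsOpen U) :
    IsOpen[sumTopology f hf] (inl '' U : Set (X ⊕ Y)) := by
  simpa using (isOpen_sumTopology_image_union_image hf (W := ∅)).2 ⟨hU, isOpen_empty, by simp⟩

theorem isOpen_sumTopology_image_compl_union_image_diff {C : Set X} {W : Set Y}
    (hC : IsClosed C) (hW : IsOpen W) :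
    IsOpen[sumTopology f hf] (inl '' Cᶜ ∪ inr '' (W \ f C)) :=
  (isOpen_sumTopology_image_union_image hf).2
    ⟨hC.isOpen_compl, hW.sdiff (hf.1 C hC),
      by rw [compl_compl]; exact disjoint_sdiff_right.subset_compl_right⟩

theorem eq_empty_of_isCompact_of_t2Space (hT2 : @T2Space (X ⊕ Y) (sumTopology f hf))
    {K : Set X} (hK : IsCompact K) : f K = ∅ := by
  let := sumTopology f hf
  have hclosed :=
    (isClosed_sumTopology hf _).1 (hK.image (continuous_inl_sumTopology hf)).isClosed
  simpa [SumClosed, preimage_image_eq _ inl_injective, preimage_inr_image_inl,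
    subset_empty_iff] using hclosed.2.2

theorem exists_isClosed_cover_of_t2Space (hT2 : @T2Space (X ⊕ Y) (sumTopology f hf)) {a b : Y}
    (hab : a ≠ b) : ∃ A B : Set X, IsClosed A ∧ IsClosed B ∧
      A ∪ B = univ ∧ b ∉ f A ∧ a ∉ f B := by
  let := sumTopology f hf
  obtain ⟨U, V, hU, hV, haU, hbV, hUV⟩ :=
    t2_separation (inr_injective.ne hab : (inr a : X ⊕ Y) ≠ inr b)
  refine ⟨inl ⁻¹' Vᶜ, inl ⁻¹' Uᶜ, hV.1, hU.1, ?_,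
    fun hb => hV.2.2 hb hbV, fun ha => hU.2.2 ha haU⟩
  rw [← preimage_union, ← compl_inter, hUV.symm.inter_eq, compl_empty, preimage_univ]

theorem separatedNhds_inl_inl [T2Space X] {x x' : X} (h : x ≠ x') :
    @SeparatedNhds (X ⊕ Y) (sumTopology f hf) {inl x} {inl x'} := by
  obtain ⟨U, V, hU, hV, hxU, hxV, hUV⟩ := t2_separation h
  exact ⟨inl '' U, inl '' V,
    isOpen_sumTopology_image_inl hf hU, isOpen_sumTopology_image_inl hf hV,
    by simpa using hxU, by simpa using hxV, (disjoint_image_iff inl_injective).2 hUV⟩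

theorem separatedNhds_inl_inr [T2Space X] [LocallyCompactSpace X]
    (hK : ∀ K : Set X, IsCompact K → f K = ∅) (x : X) (y : Y) :
    @SeparatedNhds (X ⊕ Y) (sumTopology f hf) {inl x} {inr y} := by
  obtain ⟨K, hKc, hKx⟩ := exists_compact_mem_nhds x
  refine ⟨inl '' interior K, inl '' Kᶜ ∪ inr '' (univ \ f K),
    isOpen_sumTopology_image_inl hf isOpen_interior,
    isOpen_sumTopology_image_compl_union_image_diff hf hKc.isClosed isOpen_univ,
    by simpa using mem_interior_iff_mem_nhds.2 hKx, by simp [hK K hKc],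
    disjoint_union_right.2 ⟨(disjoint_image_iff inl_injective).2
      (disjoint_compl_right.mono_left interior_subset), disjoint_image_inl_image_inr⟩⟩

theorem separatedNhds_inr_inr [T2Space Y]
    (hsep : ∀ a b : Y, a ≠ b → ∃ A B : Set X, IsClosed A ∧ IsClosed B ∧
      A ∪ B = univ ∧ b ∉ f A ∧ a ∉ f B) {a b : Y} (hab : a ≠ b) :
    @SeparatedNhds (X ⊕ Y) (sumTopology f hf) {inr a} {inr b} := by
  obtain ⟨A, B, hA, hB, hAB, hbA, haB⟩ := hsep a b hab
  obtain ⟨U, V, hU, hV, haU, hbV, hUV⟩ := t2_separation hab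
  refine ⟨inl '' Bᶜ ∪ inr '' (U \ f B), inl '' Aᶜ ∪ inr '' (V \ f A),
    isOpen_sumTopology_image_compl_union_image_diff hf hB hU,
    isOpen_sumTopology_image_compl_union_image_diff hf hA hV,
    by simpa using ⟨haU, haB⟩, by simpa using ⟨hbV, hbA⟩,
    disjoint_image_union_image ?_ (hUV.mono sdiff_subset sdiff_subset)⟩
  exact disjoint_compl_left_iff_subset.2 (compl_subset_iff_union.2 hAB)

end SumTopology

/-- Hausdorffness criterion for `X +_f Y`. -/
theorem statement7 [T2Space X] [T2Space Y] [LocallyCompactSpace X]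
    (f : Set X → Set Y) (hf : Admissible f) :
    @T2Space _ (sumTopology f hf) ↔
      ((∀ K : Set X, IsCompact K → f K = ∅) ∧
        ∀ a b : Y, a ≠ b → ∃ A B : Set X, IsClosed A ∧ IsClosed B ∧
          A ∪ B = Set.univ ∧ b ∉ f A ∧ a ∉ f B) := by
  let := sumTopology f hf
  refine ⟨fun hT2 => ⟨fun K => eq_empty_of_isCompact_of_t2Space hf hT2,
    fun a b => exists_isClosed_cover_of_t2Space hf hT2⟩, fun ⟨hK, hsep⟩ => ?_⟩
  refine t2Space_iff_disjoint_nhds.2 fun p q hpq => ?_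
  show Disjoint (𝓝 p) (𝓝 q)
  rw [← nhdsSet_singleton, ← nhdsSet_singleton, ← separatedNhds_iff_disjoint]
  rcases p with x | a <;> rcases q with x' | b
  · exact separatedNhds_inl_inl hf (inl_injective.ne_iff.1 hpq)
  · exact separatedNhds_inl_inr hf hK x b
  · exact (separatedNhds_inl_inr hf hK x' a).symm
  · exact separatedNhds_inr_inr hf hsep (inr_injective.ne_iff.1 hpq)
end

section
/- Let ψ : X → Z and φ : Y → W be continuous maps. The combined map ψ + φ : X +_f Y → Z +_h W (acting as ψ on X and φ on Y) is continuous if and only if for every closed set A ⊆ Z, f(ψ⁻¹(A)) ⊆ φ⁻¹(h(A)). -/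
open Set Topology

variable {X Y : Type*} [TopologicalSpace X] [TopologicalSpace Y]

namespace Set

theorem preimage_inl_image_inl_union_image_inr {α β : Type*} (s : Set α) (t : Set β) :
    Sum.inl ⁻¹' (Sum.inl '' s ∪ Sum.inr '' t) = s := by
  rw [preimage_union, Sum.inl_injective.preimage_image, preimage_inl_image_inr, union_empty]

theorem preimage_inr_image_inl_union_image_inr {α β : Type*} (s : Set α) (t : Set β) :
    Sum.inr ⁻¹' (Sum.inl '' s ∪ Sum.inr '' t) = t := by
  rw [preimage_union, Sum.inr_injective.preimage_image, preimage_inr_image_inl, empty_union]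

end Set

section SumSpace

variable {Z W : Type*} [TopologicalSpace Z] [TopologicalSpace W]

theorem continuous_sumTopology_iff {f : Set X → Set Y} (hf : Admissible f)
    {h : Set Z → Set W} (hh : Admissible h) (g : X ⊕ Y → Z ⊕ W) :
    Continuous[sumTopology f hf, sumTopology h hh] g ↔
      ∀ B, SumClosed h B → SumClosed f (g ⁻¹' B) := by
  rw [@continuous_iff_isClosed _ _ (sumTopology f hf) (sumTopology h hh)]
  exact forall_congr' fun B => imp_congr (isClosed_sumTopology hh B) (isClosed_sumTopology hf _)

theorem sumClosed_image_inl_union_image_inr {h : Set Z → Set W} (hh : Admissible h)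
    {A : Set Z} (hA : IsClosed A) : SumClosed h (Sum.inl '' A ∪ Sum.inr '' h A) := by
  rw [SumClosed, preimage_inl_image_inl_union_image_inr, preimage_inr_image_inl_union_image_inr]
  exact ⟨hA, hh.1 A hA, subset_rfl⟩

theorem SumClosed.preimage_sumMap {f : Set X → Set Y} {h : Set Z → Set W} {ψ : X → Z}
    {φ : Y → W} (hψ : Continuous ψ) (hφ : Continuous φ)
    (hfh : ∀ A : Set Z, IsClosed A → f (ψ ⁻¹' A) ⊆ φ ⁻¹' h A) {B : Set (Z ⊕ W)}
    (hB : SumClosed h B) : SumClosed f (Sum.map ψ φ ⁻¹' B) :=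
  ⟨hB.1.preimage hψ, hB.2.1.preimage hφ, (hfh _ hB.1).trans (preimage_mono hB.2.2)⟩

end SumSpace

/-- continuity criterion for `ψ + φ : X +_f Y → Z +_h W`. -/
theorem statement9 {Z W : Type*} [TopologicalSpace Z] [TopologicalSpace W]
    (f : Set X → Set Y) (hf : Admissible f) (h : Set Z → Set W) (hh : Admissible h)
    (ψ : X → Z) (φ : Y → W) (hψ : Continuous ψ) (hφ : Continuous φ) :
    Continuous[sumTopology f hf, sumTopology h hh] (Sum.map ψ φ) ↔
      ∀ A : Set Z, IsClosed A → f (ψ ⁻¹' A) ⊆ φ ⁻¹' (h A) := by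
  rw [continuous_sumTopology_iff]
  refine ⟨fun hc A hA => ?_, fun hfh B hB => hB.preimage_sumMap hψ hφ hfh⟩
  -- Pull back the closure `A ∪ h A` of `A` in `Z +_h W`.
  have hpull := (hc _ (sumClosed_image_inl_union_image_inr hh hA)).2.2
  change f (ψ ⁻¹' (Sum.inl ⁻¹' _)) ⊆ φ ⁻¹' (Sum.inr ⁻¹' _) at hpull
  rwa [preimage_inl_image_inl_union_image_inr, preimage_inr_image_inl_union_image_inr] at hpull
end
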